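/- For every integer m ≥ 2, the following inequality between terminating hypergeometric sums at argument 2 holds: Σ_{r=0}^{m+2} [(3/2)_r (−m−2)_r 2^r]/[(−4m−4)_r r!] − Σ_{r=0}^{m+1} [(3/2)_r (−m−1)_r 2^r]/[(−4m)_r r!] > 3·( Σ_{r=0}^{m+2} [(1/2)_r (−m−2)_r 2^r]/[(−4m−4)_r r!] − Σ_{r=0}^{m+1} [(1/2)_r (−m−1)_r 2^r]/[(−4m)_r r!] ); that is, ₂F₁(3/2, −m−2; −4m−4; 2) − ₂F₁(3/2, −m−1; −4m; 2) > 3[₂F₁(1/2, −m−2; −4m−4; 2) − ₂F₁(1/2, −m−1; −4m; 2)]. -/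

import Mathlib

set_option maxHeartbeats 1600000

/-- Rising factorial (Pochhammer symbol) `(a)_n = a (a+1) ⋯ (a+n−1)`. -/
noncomputable def poch (a : ℝ) (n : ℕ) : ℝ := ∏ i ∈ Finset.range n, (a + i)

/-- Falling-type product `y (y−1) ⋯ (y−n+1)`. -/
noncomputable def ff (y : ℝ) (n : ℕ) : ℝ := ∏ i ∈ Finset.range n, (y - i)

noncomputable def bb (r : ℕ) : ℝ := (poch (3/2) r - 3 * poch (1/2) r) * 2^r / (Nat.factorial r)

noncomputable def wfun (X : ℝ) (r : ℕ) : ℝ :=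
  bb r * (ff (X+2) r / ff (4*X+4) r - ff (X+1) r / ff (4*X) r)

lemma poch_succ (a : ℝ) (n : ℕ) : poch a (n + 1) = poch a n * (a + n) := by
  rw [poch, poch, Finset.prod_range_succ]

lemma poch_neg (y : ℝ) (n : ℕ) : poch (-y) n = (-1) ^ n * ff y n := by
  induction n with
  | zero => simp [poch, ff]
  | succ n ih =>
    rw [poch, ff, Finset.prod_range_succ, Finset.prod_range_succ, ← poch, ← ff, ih]
    ring

lemma ff_pos {y : ℝ} {n : ℕ} (h : (n : ℝ) ≤ y) : 0 < ff y n := by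
  apply Finset.prod_pos
  intro i hi
  have : (i : ℝ) < n := by exact_mod_cast Finset.mem_range.mp hi
  linarith

lemma ff_nonneg {y : ℝ} {n : ℕ} (h : (n : ℝ) ≤ y + 1) : 0 ≤ ff y n := by
  apply Finset.prod_nonneg
  intro i hi
  have h2 : ((i + 1 : ℕ) : ℝ) ≤ (n : ℝ) := by
    exact_mod_cast Nat.succ_le_of_lt (Finset.mem_range.mp hi)
  push_cast at h2
  linarith

lemma ff_eq_zero {y : ℝ} {n i : ℕ} (hi : i < n) (h : y = i) : ff y n = 0 :=
  Finset.prod_eq_zero (Finset.mem_range.mpr hi) (by rw [h]; ring)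

lemma poch_ratio (y1 y2 : ℝ) (n : ℕ) :
    poch (-y1) n / poch (-y2) n = ff y1 n / ff y2 n := by
  rw [poch_neg, poch_neg, mul_div_mul_left]
  positivity

lemma poch_three_half (n : ℕ) : poch (3/2) n = (2 * n + 1) * poch (1/2) n := by
  induction n with
  | zero => simp [poch]
  | succ n ih =>
    rw [poch_succ, poch_succ, ih]
    push_cast
    ring

lemma poch_half_pos (n : ℕ) : 0 < poch (1/2) n := by
  apply Finset.prod_pos
  intro i _
  positivity

lemma bb_nonneg {r : ℕ} (hr : 2 ≤ r) : 0 ≤ bb r := by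
  unfold bb
  rw [poch_three_half]
  have h1 := poch_half_pos r
  have h2 : (2:ℝ) ≤ r := by exact_mod_cast hr
  have h3 : (2 * (r:ℝ) + 1) * poch (1/2) r - 3 * poch (1/2) r = (2 * (r:ℝ) - 2) * poch (1/2) r := by
    ring
  rw [h3]
  apply div_nonneg _ (by positivity)
  apply mul_nonneg _ (by positivity)
  exact mul_nonneg (by linarith) h1.le

lemma term_comb (p3 p1 pm q f t : ℝ) :
    p3 * pm * t / (q * f) - 3 * (p1 * pm * t / (q * f)) =
      ((p3 - 3 * p1) * t / f) * (pm / q) := by ring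

lemma id1 (x : ℝ) (r : ℕ) : ff (x + 2) r * (x + 2 - r) = (x + 2) * ff (x + 1) r := by
  have h1 := Finset.prod_range_succ (fun i : ℕ => (x + 2 - i)) r
  have h2 := Finset.prod_range_succ' (fun i : ℕ => (x + 2 - i)) r
  rw [h2] at h1
  have h3 : ∀ i ∈ Finset.range r, (x + 2 - ((i : ℕ) + 1 : ℕ) : ℝ) = (x + 1 - i) := by
    intro i _; push_cast; ring
  rw [Finset.prod_congr rfl h3] at h1
  unfold ff
  push_cast at h1 ⊢
  linear_combination -h1

lemma id2 (x : ℝ) (r : ℕ) :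
    ff (4*x + 4) r * ((4*x + 4 - r) * (4*x + 3 - r) * (4*x + 2 - r) * (4*x + 1 - r)) =
      ((4*x + 4) * (4*x + 3) * (4*x + 2) * (4*x + 1)) * ff (4*x) r := by
  have h1 := Finset.prod_range_add (fun i : ℕ => (4*x + 4 - i)) r 4
  have h2 := Finset.prod_range_add (fun i : ℕ => (4*x + 4 - i)) 4 r
  rw [show r + 4 = 4 + r from by omega, h2] at h1
  have h3 : ∀ i ∈ Finset.range r, (4*x + 4 - ((4 + i : ℕ) : ℝ)) = (4*x - i) := by
    intro i _; push_cast; ring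
  rw [Finset.prod_congr rfl h3] at h1
  unfold ff
  simp only [Finset.prod_range_succ, Finset.prod_range_zero] at h1
  push_cast at h1 ⊢
  linear_combination -h1

lemma Smono {x : ℝ} {mm r : ℕ} (hx : x = mm) (h4 : 4 ≤ r) (hr : r ≤ mm + 2) :
    ff (x + 1) r / ff (4*x) r ≤ ff (x + 2) r / ff (4*x + 4) r := by
  have hrx : (r : ℝ) ≤ mm + 2 := by exact_mod_cast hr
  have hQ0 : 0 < ff (4*x) r := by
    apply ff_pos
    have : r ≤ 4 * mm := by omega
    rw [hx]
    exact_mod_cast this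
  have hQ1 : 0 < ff (4*x + 4) r := by
    apply ff_pos
    have h : (r : ℝ) ≤ 4 * mm + 4 := by
      have : r ≤ 4 * mm + 4 := by omega
      exact_mod_cast this
    rw [hx]; linarith
  have hP0 : 0 ≤ ff (x + 1) r := by
    apply ff_nonneg; rw [hx]; linarith
  have hP1 : 0 ≤ ff (x + 2) r := by
    apply ff_nonneg; rw [hx]; linarith
  rw [div_le_div_iff₀ hQ0 hQ1]
  rcases eq_or_lt_of_le hr with heq | hlt
  · have hz : ff (x + 1) r = 0 := by
      apply ff_eq_zero (i := mm + 1)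
      · omega
      · rw [hx]; push_cast; ring
    rw [hz, zero_mul]
    exact mul_nonneg hP1 hQ0.le
  · obtain ⟨s, rfl⟩ : ∃ s, r = s + 4 := ⟨r - 4, by omega⟩
    obtain ⟨q, rfl⟩ : ∃ q, mm = s + q + 3 := ⟨mm - s - 3, by omega⟩
    have hxval : x = (s : ℝ) + q + 3 := by rw [hx]; push_cast; ring
    set Z : ℝ := (4*x + 4) * (4*x + 3) * (4*x + 2) * (4*x + 1) with hZ
    set Z' : ℝ := (4*x + 4 - (s+4 : ℕ)) * (4*x + 3 - (s+4 : ℕ)) * (4*x + 2 - (s+4 : ℕ)) * (4*x + 1 - (s+4 : ℕ)) with hZ'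
    have hkey : 0 ≤ (x + 2) * Z' - (x + 2 - (s+4 : ℕ)) * Z := by
      have hid : (x + 2) * Z' - (x + 2 - (s+4 : ℕ)) * Z =
          15720 + 11272*(q:ℝ) + 2400*(q:ℝ)^2 + 128*(q:ℝ)^3 + 32062*(s:ℝ) + 22350*(s:ℝ)*(q:ℝ)
          + 5176*(s:ℝ)*(q:ℝ)^2 + 416*(s:ℝ)*(q:ℝ)^3 + 23245*(s:ℝ)^2 + 13147*(s:ℝ)^2*(q:ℝ)
          + 2232*(s:ℝ)^2*(q:ℝ)^2 + 96*(s:ℝ)^2*(q:ℝ)^3 + 7889*(s:ℝ)^3 + 3094*(s:ℝ)^3*(q:ℝ)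
          + 272*(s:ℝ)^3*(q:ℝ)^2 + 1283*(s:ℝ)^4 + 257*(s:ℝ)^4*(q:ℝ) + 81*(s:ℝ)^5 := by
        rw [hZ, hZ', hxval]; push_cast; ring
      rw [hid]; positivity
    have hcZ : 0 < (x + 2 - (s+4 : ℕ)) * Z := by
      have h1 : (0:ℝ) < x + 2 - (s+4 : ℕ) := by
        rw [hxval]; push_cast
        have hq : (0:ℝ) ≤ (q:ℝ) := Nat.cast_nonneg q
        linarith
      have h2 : (0:ℝ) < Z := by rw [hZ, hxval]; push_cast; positivity
      positivity
    have e : ff (x + 2) (s+4) * ff (4*x) (s+4) * ((x + 2 - (s+4 : ℕ)) * Z) -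
        ff (x + 1) (s+4) * ff (4*x + 4) (s+4) * ((x + 2 - (s+4 : ℕ)) * Z) =
        (ff (x + 1) (s+4) * ff (4*x + 4) (s+4)) * ((x + 2) * Z' - (x + 2 - (s+4 : ℕ)) * Z) := by
      have A := id1 x (s+4)
      have B := id2 x (s+4)
      rw [hZ, hZ']
      linear_combination (ff (4*x) (s+4) * ((4*x + 4) * (4*x + 3) * (4*x + 2) * (4*x + 1))) * A -
        ((x + 2) * ff (x + 1) (s+4)) * B
    have hnn : 0 ≤ (ff (x + 1) (s+4) * ff (4*x + 4) (s+4)) * ((x + 2) * Z' - (x + 2 - (s+4 : ℕ)) * Z) :=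
      mul_nonneg (mul_nonneg hP0 hQ1.le) hkey
    have hle := le_of_sub_nonneg (by linarith [e] : (0:ℝ) ≤
      ff (x + 2) (s+4) * ff (4*x) (s+4) * ((x + 2 - (s+4 : ℕ)) * Z) -
      ff (x + 1) (s+4) * ff (4*x + 4) (s+4) * ((x + 2 - (s+4 : ℕ)) * Z))
    exact le_of_mul_le_mul_right hle hcZ

lemma convert (m : ℕ) (hm : 1 ≤ m) :
    (∑ r ∈ Finset.range (m + 3),
        poch (3 / 2) r * poch (-(m : ℝ) - 2) r * 2 ^ r /
          (poch (-(4 * (m : ℝ)) - 4) r * (Nat.factorial r : ℝ))) -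
      (∑ r ∈ Finset.range (m + 2),
        poch (3 / 2) r * poch (-(m : ℝ) - 1) r * 2 ^ r /
          (poch (-(4 * (m : ℝ))) r * (Nat.factorial r : ℝ))) -
    3 * ((∑ r ∈ Finset.range (m + 3),
        poch (1 / 2) r * poch (-(m : ℝ) - 2) r * 2 ^ r /
          (poch (-(4 * (m : ℝ)) - 4) r * (Nat.factorial r : ℝ))) -
      (∑ r ∈ Finset.range (m + 2),
        poch (1 / 2) r * poch (-(m : ℝ) - 1) r * 2 ^ r /
          (poch (-(4 * (m : ℝ))) r * (Nat.factorial r : ℝ)))) =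
    ∑ r ∈ Finset.range (m + 3), wfun (m : ℝ) r := by
  have hz : poch (-(m : ℝ) - 1) (m + 2) = 0 := by
    rw [show -(m : ℝ) - 1 = -((m : ℝ) + 1) from by ring, poch_neg,
      ff_eq_zero (i := m + 1) (by omega) (by push_cast; ring), mul_zero]
  have e3 : (∑ r ∈ Finset.range (m + 3),
      poch (3 / 2) r * poch (-(m : ℝ) - 1) r * 2 ^ r /
        (poch (-(4 * (m : ℝ))) r * (Nat.factorial r : ℝ))) =
      ∑ r ∈ Finset.range (m + 2),
      poch (3 / 2) r * poch (-(m : ℝ) - 1) r * 2 ^ r /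
        (poch (-(4 * (m : ℝ))) r * (Nat.factorial r : ℝ)) := by
    rw [show m + 3 = (m + 2) + 1 from by omega, Finset.sum_range_succ, hz]
    simp
  have e1 : (∑ r ∈ Finset.range (m + 3),
      poch (1 / 2) r * poch (-(m : ℝ) - 1) r * 2 ^ r /
        (poch (-(4 * (m : ℝ))) r * (Nat.factorial r : ℝ))) =
      ∑ r ∈ Finset.range (m + 2),
      poch (1 / 2) r * poch (-(m : ℝ) - 1) r * 2 ^ r /
        (poch (-(4 * (m : ℝ))) r * (Nat.factorial r : ℝ)) := by
    rw [show m + 3 = (m + 2) + 1 from by omega, Finset.sum_range_succ, hz]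
    simp
  rw [← e3, ← e1]
  rw [← Finset.sum_sub_distrib, ← Finset.sum_sub_distrib, Finset.mul_sum, ← Finset.sum_sub_distrib]
  apply Finset.sum_congr rfl
  intro r _
  have h3 : poch (3 / 2) r * poch (-(m : ℝ) - 2) r * 2 ^ r /
        (poch (-(4 * (m : ℝ)) - 4) r * (Nat.factorial r : ℝ)) -
      3 * (poch (1 / 2) r * poch (-(m : ℝ) - 2) r * 2 ^ r /
        (poch (-(4 * (m : ℝ)) - 4) r * (Nat.factorial r : ℝ))) =
      bb r * (ff ((m : ℝ) + 2) r / ff (4 * (m : ℝ) + 4) r) := by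
    rw [show -(m : ℝ) - 2 = -((m : ℝ) + 2) from by ring,
      show -(4 * (m : ℝ)) - 4 = -(4 * (m : ℝ) + 4) from by ring,
      term_comb, poch_ratio, bb]
  have h0 : poch (3 / 2) r * poch (-(m : ℝ) - 1) r * 2 ^ r /
        (poch (-(4 * (m : ℝ))) r * (Nat.factorial r : ℝ)) -
      3 * (poch (1 / 2) r * poch (-(m : ℝ) - 1) r * 2 ^ r /
        (poch (-(4 * (m : ℝ))) r * (Nat.factorial r : ℝ))) =
      bb r * (ff ((m : ℝ) + 1) r / ff (4 * (m : ℝ)) r) := by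
    rw [show -(m : ℝ) - 1 = -((m : ℝ) + 1) from by ring, term_comb, poch_ratio, bb]
  unfold wfun
  linear_combination h3 - h0

lemma head_pos (k : ℕ) : (0:ℝ) < ∑ r ∈ Finset.range 8, wfun ((k+6 : ℕ) : ℝ) r := by
  set Dk : ℝ := (4*(k:ℝ) + 22) * (4*(k:ℝ) + 23) * (4*(k:ℝ) + 24) * (4*(k:ℝ) + 25) * (4*(k:ℝ) + 26) * (4*(k:ℝ) + 27) * (4*(k:ℝ) + 28) * (4*(k:ℝ) + 18) * (4*(k:ℝ) + 19) * (4*(k:ℝ) + 20) * (4*(k:ℝ) + 21) * (4*(k:ℝ) + 22) * (4*(k:ℝ) + 23) * (4*(k:ℝ) + 24) with hDk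
  have eP12 : ff (((k+6 : ℕ) : ℝ)+2) 2 = ((k:ℝ) + 8) * ((k:ℝ) + 7) := by
    simp only [ff, Finset.prod_range_succ, Finset.prod_range_zero]
    push_cast
    ring
  have eQ12 : ff (4*((k+6 : ℕ) : ℝ)+4) 2 = (4*(k:ℝ) + 28) * (4*(k:ℝ) + 27) := by
    simp only [ff, Finset.prod_range_succ, Finset.prod_range_zero]
    push_cast
    ring
  have eP02 : ff (((k+6 : ℕ) : ℝ)+1) 2 = ((k:ℝ) + 7) * ((k:ℝ) + 6) := by
    simp only [ff, Finset.prod_range_succ, Finset.prod_range_zero]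
    push_cast
    ring
  have eQ02 : ff (4*((k+6 : ℕ) : ℝ)) 2 = (4*(k:ℝ) + 24) * (4*(k:ℝ) + 23) := by
    simp only [ff, Finset.prod_range_succ, Finset.prod_range_zero]
    push_cast
    ring
  have eb2 : bb 2 = 3 := by
    simp only [bb, poch, Finset.prod_range_succ, Finset.prod_range_zero, Nat.factorial]
    norm_num
  have eP13 : ff (((k+6 : ℕ) : ℝ)+2) 3 = ((k:ℝ) + 8) * ((k:ℝ) + 7) * ((k:ℝ) + 6) := by
    simp only [ff, Finset.prod_range_succ, Finset.prod_range_zero]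
    push_cast
    ring
  have eQ13 : ff (4*((k+6 : ℕ) : ℝ)+4) 3 = (4*(k:ℝ) + 28) * (4*(k:ℝ) + 27) * (4*(k:ℝ) + 26) := by
    simp only [ff, Finset.prod_range_succ, Finset.prod_range_zero]
    push_cast
    ring
  have eP03 : ff (((k+6 : ℕ) : ℝ)+1) 3 = ((k:ℝ) + 7) * ((k:ℝ) + 6) * ((k:ℝ) + 5) := by
    simp only [ff, Finset.prod_range_succ, Finset.prod_range_zero]
    push_cast
    ring
  have eQ03 : ff (4*((k+6 : ℕ) : ℝ)) 3 = (4*(k:ℝ) + 24) * (4*(k:ℝ) + 23) * (4*(k:ℝ) + 22) := by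
    simp only [ff, Finset.prod_range_succ, Finset.prod_range_zero]
    push_cast
    ring
  have eb3 : bb 3 = 10 := by
    simp only [bb, poch, Finset.prod_range_succ, Finset.prod_range_zero, Nat.factorial]
    norm_num
  have eP14 : ff (((k+6 : ℕ) : ℝ)+2) 4 = ((k:ℝ) + 8) * ((k:ℝ) + 7) * ((k:ℝ) + 6) * ((k:ℝ) + 5) := by
    simp only [ff, Finset.prod_range_succ, Finset.prod_range_zero]
    push_cast
    ring
  have eQ14 : ff (4*((k+6 : ℕ) : ℝ)+4) 4 = (4*(k:ℝ) + 28) * (4*(k:ℝ) + 27) * (4*(k:ℝ) + 26) * (4*(k:ℝ) + 25) := by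
    simp only [ff, Finset.prod_range_succ, Finset.prod_range_zero]
    push_cast
    ring
  have eP04 : ff (((k+6 : ℕ) : ℝ)+1) 4 = ((k:ℝ) + 7) * ((k:ℝ) + 6) * ((k:ℝ) + 5) * ((k:ℝ) + 4) := by
    simp only [ff, Finset.prod_range_succ, Finset.prod_range_zero]
    push_cast
    ring
  have eQ04 : ff (4*((k+6 : ℕ) : ℝ)) 4 = (4*(k:ℝ) + 24) * (4*(k:ℝ) + 23) * (4*(k:ℝ) + 22) * (4*(k:ℝ) + 21) := by
    simp only [ff, Finset.prod_range_succ, Finset.prod_range_zero]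
    push_cast
    ring
  have eb4 : bb 4 = (105/4) := by
    simp only [bb, poch, Finset.prod_range_succ, Finset.prod_range_zero, Nat.factorial]
    norm_num
  have eP15 : ff (((k+6 : ℕ) : ℝ)+2) 5 = ((k:ℝ) + 8) * ((k:ℝ) + 7) * ((k:ℝ) + 6) * ((k:ℝ) + 5) * ((k:ℝ) + 4) := by
    simp only [ff, Finset.prod_range_succ, Finset.prod_range_zero]
    push_cast
    ring
  have eQ15 : ff (4*((k+6 : ℕ) : ℝ)+4) 5 = (4*(k:ℝ) + 28) * (4*(k:ℝ) + 27) * (4*(k:ℝ) + 26) * (4*(k:ℝ) + 25) * (4*(k:ℝ) + 24) := by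
    simp only [ff, Finset.prod_range_succ, Finset.prod_range_zero]
    push_cast
    ring
  have eP05 : ff (((k+6 : ℕ) : ℝ)+1) 5 = ((k:ℝ) + 7) * ((k:ℝ) + 6) * ((k:ℝ) + 5) * ((k:ℝ) + 4) * ((k:ℝ) + 3) := by
    simp only [ff, Finset.prod_range_succ, Finset.prod_range_zero]
    push_cast
    ring
  have eQ05 : ff (4*((k+6 : ℕ) : ℝ)) 5 = (4*(k:ℝ) + 24) * (4*(k:ℝ) + 23) * (4*(k:ℝ) + 22) * (4*(k:ℝ) + 21) * (4*(k:ℝ) + 20) := by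
    simp only [ff, Finset.prod_range_succ, Finset.prod_range_zero]
    push_cast
    ring
  have eb5 : bb 5 = 63 := by
    simp only [bb, poch, Finset.prod_range_succ, Finset.prod_range_zero, Nat.factorial]
    norm_num
  have eP16 : ff (((k+6 : ℕ) : ℝ)+2) 6 = ((k:ℝ) + 8) * ((k:ℝ) + 7) * ((k:ℝ) + 6) * ((k:ℝ) + 5) * ((k:ℝ) + 4) * ((k:ℝ) + 3) := by
    simp only [ff, Finset.prod_range_succ, Finset.prod_range_zero]
    push_cast
    ring
  have eQ16 : ff (4*((k+6 : ℕ) : ℝ)+4) 6 = (4*(k:ℝ) + 28) * (4*(k:ℝ) + 27) * (4*(k:ℝ) + 26) * (4*(k:ℝ) + 25) * (4*(k:ℝ) + 24) * (4*(k:ℝ) + 23) := by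
    simp only [ff, Finset.prod_range_succ, Finset.prod_range_zero]
    push_cast
    ring
  have eP06 : ff (((k+6 : ℕ) : ℝ)+1) 6 = ((k:ℝ) + 7) * ((k:ℝ) + 6) * ((k:ℝ) + 5) * ((k:ℝ) + 4) * ((k:ℝ) + 3) * ((k:ℝ) + 2) := by
    simp only [ff, Finset.prod_range_succ, Finset.prod_range_zero]
    push_cast
    ring
  have eQ06 : ff (4*((k+6 : ℕ) : ℝ)) 6 = (4*(k:ℝ) + 24) * (4*(k:ℝ) + 23) * (4*(k:ℝ) + 22) * (4*(k:ℝ) + 21) * (4*(k:ℝ) + 20) * (4*(k:ℝ) + 19) := by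
    simp only [ff, Finset.prod_range_succ, Finset.prod_range_zero]
    push_cast
    ring
  have eb6 : bb 6 = (1155/8) := by
    simp only [bb, poch, Finset.prod_range_succ, Finset.prod_range_zero, Nat.factorial]
    norm_num
  have eP17 : ff (((k+6 : ℕ) : ℝ)+2) 7 = ((k:ℝ) + 8) * ((k:ℝ) + 7) * ((k:ℝ) + 6) * ((k:ℝ) + 5) * ((k:ℝ) + 4) * ((k:ℝ) + 3) * ((k:ℝ) + 2) := by
    simp only [ff, Finset.prod_range_succ, Finset.prod_range_zero]
    push_cast
    ring
  have eQ17 : ff (4*((k+6 : ℕ) : ℝ)+4) 7 = (4*(k:ℝ) + 28) * (4*(k:ℝ) + 27) * (4*(k:ℝ) + 26) * (4*(k:ℝ) + 25) * (4*(k:ℝ) + 24) * (4*(k:ℝ) + 23) * (4*(k:ℝ) + 22) := by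
    simp only [ff, Finset.prod_range_succ, Finset.prod_range_zero]
    push_cast
    ring
  have eP07 : ff (((k+6 : ℕ) : ℝ)+1) 7 = ((k:ℝ) + 7) * ((k:ℝ) + 6) * ((k:ℝ) + 5) * ((k:ℝ) + 4) * ((k:ℝ) + 3) * ((k:ℝ) + 2) * ((k:ℝ) + 1) := by
    simp only [ff, Finset.prod_range_succ, Finset.prod_range_zero]
    push_cast
    ring
  have eQ07 : ff (4*((k+6 : ℕ) : ℝ)) 7 = (4*(k:ℝ) + 24) * (4*(k:ℝ) + 23) * (4*(k:ℝ) + 22) * (4*(k:ℝ) + 21) * (4*(k:ℝ) + 20) * (4*(k:ℝ) + 19) * (4*(k:ℝ) + 18) := by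
    simp only [ff, Finset.prod_range_succ, Finset.prod_range_zero]
    push_cast
    ring
  have eb7 : bb 7 = (1287/4) := by
    simp only [bb, poch, Finset.prod_range_succ, Finset.prod_range_zero, Nat.factorial]
    norm_num
  have t2 : 3 * ((((k:ℝ) + 8) * ((k:ℝ) + 7)) / ((4*(k:ℝ) + 28) * (4*(k:ℝ) + 27)) - (((k:ℝ) + 7) * ((k:ℝ) + 6)) / ((4*(k:ℝ) + 24) * (4*(k:ℝ) + 23))) = (((-2520) + (-780)*(k:ℝ) + (-60)*(k:ℝ)^2) * ((4*(k:ℝ) + 22) * (4*(k:ℝ) + 23) * (4*(k:ℝ) + 24) * (4*(k:ℝ) + 25) * (4*(k:ℝ) + 26) * (4*(k:ℝ) + 18) * (4*(k:ℝ) + 19) * (4*(k:ℝ) + 20) * (4*(k:ℝ) + 21) * (4*(k:ℝ) + 22))) / Dk := by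
    rw [hDk, div_sub_div _ _ (by positivity) (by positivity), ← mul_div_assoc, div_eq_div_iff (by positivity) (by positivity)]
    ring
  have t3 : 10 * ((((k:ℝ) + 8) * ((k:ℝ) + 7) * ((k:ℝ) + 6)) / ((4*(k:ℝ) + 28) * (4*(k:ℝ) + 27) * (4*(k:ℝ) + 26)) - (((k:ℝ) + 7) * ((k:ℝ) + 6) * ((k:ℝ) + 5)) / ((4*(k:ℝ) + 24) * (4*(k:ℝ) + 23) * (4*(k:ℝ) + 22))) = (((-473760) + (-348240)*(k:ℝ) + (-93840)*(k:ℝ)^2 + (-11040)*(k:ℝ)^3 + (-480)*(k:ℝ)^4) * ((4*(k:ℝ) + 22) * (4*(k:ℝ) + 23) * (4*(k:ℝ) + 24) * (4*(k:ℝ) + 25) * (4*(k:ℝ) + 18) * (4*(k:ℝ) + 19) * (4*(k:ℝ) + 20) * (4*(k:ℝ) + 21))) / Dk := by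
    rw [hDk, div_sub_div _ _ (by positivity) (by positivity), ← mul_div_assoc, div_eq_div_iff (by positivity) (by positivity)]
    ring
  have t4 : (105/4) * ((((k:ℝ) + 8) * ((k:ℝ) + 7) * ((k:ℝ) + 6) * ((k:ℝ) + 5)) / ((4*(k:ℝ) + 28) * (4*(k:ℝ) + 27) * (4*(k:ℝ) + 26) * (4*(k:ℝ) + 25)) - (((k:ℝ) + 7) * ((k:ℝ) + 6) * ((k:ℝ) + 5) * ((k:ℝ) + 4)) / ((4*(k:ℝ) + 24) * (4*(k:ℝ) + 23) * (4*(k:ℝ) + 22) * (4*(k:ℝ) + 21))) = ((411188400 + 370078380*(k:ℝ) + 136638390*(k:ℝ)^2 + 26403300*(k:ℝ)^3 + 2802450*(k:ℝ)^4 + 153720*(k:ℝ)^5 + 3360*(k:ℝ)^6) * ((4*(k:ℝ) + 22) * (4*(k:ℝ) + 23) * (4*(k:ℝ) + 24) * (4*(k:ℝ) + 18) * (4*(k:ℝ) + 19) * (4*(k:ℝ) + 20))) / Dk := by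
    rw [hDk, div_sub_div _ _ (by positivity) (by positivity), ← mul_div_assoc, div_eq_div_iff (by positivity) (by positivity)]
    ring
  have t5 : 63 * ((((k:ℝ) + 8) * ((k:ℝ) + 7) * ((k:ℝ) + 6) * ((k:ℝ) + 5) * ((k:ℝ) + 4)) / ((4*(k:ℝ) + 28) * (4*(k:ℝ) + 27) * (4*(k:ℝ) + 26) * (4*(k:ℝ) + 25) * (4*(k:ℝ) + 24)) - (((k:ℝ) + 7) * ((k:ℝ) + 6) * ((k:ℝ) + 5) * ((k:ℝ) + 4) * ((k:ℝ) + 3)) / ((4*(k:ℝ) + 24) * (4*(k:ℝ) + 23) * (4*(k:ℝ) + 22) * (4*(k:ℝ) + 21) * (4*(k:ℝ) + 20))) = ((286987276800 + 390425132160*(k:ℝ) + 230586168960*(k:ℝ)^2 + 77227708320*(k:ℝ)^3 + 16042511520*(k:ℝ)^4 + 2116326240*(k:ℝ)^5 + 173103840*(k:ℝ)^6 + 8023680*(k:ℝ)^7 + 161280*(k:ℝ)^8) * ((4*(k:ℝ) + 22) * (4*(k:ℝ) + 23) * (4*(k:ℝ) + 18) * (4*(k:ℝ) + 19))) / Dk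 := by
    rw [hDk, div_sub_div _ _ (by positivity) (by positivity), ← mul_div_assoc, div_eq_div_iff (by positivity) (by positivity)]
    ring
  have t6 : (1155/8) * ((((k:ℝ) + 8) * ((k:ℝ) + 7) * ((k:ℝ) + 6) * ((k:ℝ) + 5) * ((k:ℝ) + 4) * ((k:ℝ) + 3)) / ((4*(k:ℝ) + 28) * (4*(k:ℝ) + 27) * (4*(k:ℝ) + 26) * (4*(k:ℝ) + 25) * (4*(k:ℝ) + 24) * (4*(k:ℝ) + 23)) - (((k:ℝ) + 7) * ((k:ℝ) + 6) * ((k:ℝ) + 5) * ((k:ℝ) + 4) * ((k:ℝ) + 3) * ((k:ℝ) + 2)) / ((4*(k:ℝ) + 24) * (4*(k:ℝ) + 23) * (4*(k:ℝ) + 22) * (4*(k:ℝ) + 21) * (4*(k:ℝ) + 20) * (4*(k:ℝ) + 19))) = ((84686584752000 + 159383745813600*(k:ℝ) + 133520557040640*(k:ℝ)^2 + 65618305968600*(k:ℝ)^3 + 20964217428000*(k:ℝ)^4 + 4552181310600*(k:ℝ)^5 + 680661855720*(k:ℝ)^6 + 69225710400*(k:ℝ)^7 + 4584195000*(k:ℝ)^8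 + 178516800*(k:ℝ)^9 + 3104640*(k:ℝ)^10) * ((4*(k:ℝ) + 22) * (4*(k:ℝ) + 18))) / Dk := by
    rw [hDk, div_sub_div _ _ (by positivity) (by positivity), ← mul_div_assoc, div_eq_div_iff (by positivity) (by positivity)]
    ring
  have t7 : (1287/4) * ((((k:ℝ) + 8) * ((k:ℝ) + 7) * ((k:ℝ) + 6) * ((k:ℝ) + 5) * ((k:ℝ) + 4) * ((k:ℝ) + 3) * ((k:ℝ) + 2)) / ((4*(k:ℝ) + 28) * (4*(k:ℝ) + 27) * (4*(k:ℝ) + 26) * (4*(k:ℝ) + 25) * (4*(k:ℝ) + 24) * (4*(k:ℝ) + 23) * (4*(k:ℝ) + 22)) - (((k:ℝ) + 7) * ((k:ℝ) + 6) * ((k:ℝ) + 5) * ((k:ℝ) + 4) * ((k:ℝ) + 3) * ((k:ℝ) + 2) * ((k:ℝ) + 1)) / ((4*(k:ℝ) + 24) * (4*(k:ℝ) + 23) * (4*(k:ℝ) + 22) * (4*(k:ℝ) + 21) * (4*(k:ℝ) + 20) * (4*(k:ℝ) + 19) * (4*(k:ℝ) + 18))) = (12952449231321600 + 33325312387086720*(k:ℝ)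 + 38503834248559680*(k:ℝ)^2 + 26482731515079840*(k:ℝ)^3 + 12100717205937360*(k:ℝ)^4 + 3876062813663040*(k:ℝ)^5 + 893656292649120*(k:ℝ)^6 + 149591396354400*(k:ℝ)^7 + 18059811129360*(k:ℝ)^8 + 1534709816640*(k:ℝ)^9 + 87192705600*(k:ℝ)^10 + 2975132160*(k:ℝ)^11 + 46126080*(k:ℝ)^12) / Dk := by
    rw [hDk, div_sub_div _ _ (by positivity) (by positivity), ← mul_div_assoc, div_eq_div_iff (by positivity) (by positivity)]
    ring
  have w0 : wfun ((k+6 : ℕ) : ℝ) 0 = 0 := by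
    simp [wfun, ff]
  have w1 : wfun ((k+6 : ℕ) : ℝ) 1 = 0 := by
    simp only [wfun, bb, poch, Finset.prod_range_succ, Finset.prod_range_zero, Nat.factorial]
    norm_num
  simp only [Finset.sum_range_succ, Finset.sum_range_zero]
  rw [w0, w1]
  simp only [wfun]
  rw [eP12, eQ12, eP02, eQ02, eb2, eP13, eQ13, eP03, eQ03, eb3, eP14, eQ14, eP04, eQ04, eb4, eP15, eQ15, eP05, eQ05, eb5, eP16, eQ16, eP06, eQ06, eb6, eP17, eQ17, eP07, eQ07, eb7]
  rw [t2, t3, t4, t5, t6, t7]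
  rw [zero_add, zero_add, zero_add]
  rw [← add_div, ← add_div, ← add_div, ← add_div, ← add_div]
  apply div_pos
  · have hN : 0 < (46787251035571200 + 105416056136240640*(k:ℝ) + 108257759756297280*(k:ℝ)^2 + 66975902398353600*(k:ℝ)^3 + 27790235496713040*(k:ℝ)^4 + 8144099832203040*(k:ℝ)^5 + 1727787912005760*(k:ℝ)^6 + 267260009073120*(k:ℝ)^7 + 29901502977840*(k:ℝ)^8 + 2358536973120*(k:ℝ)^9 + 124412237760*(k:ℝ)^10 + 3937390080*(k:ℝ)^11 + 56478720*(k:ℝ)^12) := by positivity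
    refine lt_of_lt_of_eq hN ?_
    ring
  · rw [hDk]; positivity

/-- For `m ≥ 2`,
`₂F₁(3/2, −m−2; −4m−4; 2) − ₂F₁(3/2, −m−1; −4m; 2)
  > 3 [₂F₁(1/2, −m−2; −4m−4; 2) − ₂F₁(1/2, −m−1; −4m; 2)]`. -/
theorem hypergeometric_ineq (m : ℕ) (hm : 2 ≤ m) :
    (∑ r ∈ Finset.range (m + 3),
        poch (3 / 2) r * poch (-(m : ℝ) - 2) r * 2 ^ r /
          (poch (-(4 * (m : ℝ)) - 4) r * (Nat.factorial r : ℝ))) -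
      (∑ r ∈ Finset.range (m + 2),
        poch (3 / 2) r * poch (-(m : ℝ) - 1) r * 2 ^ r /
          (poch (-(4 * (m : ℝ))) r * (Nat.factorial r : ℝ))) >
    3 * ((∑ r ∈ Finset.range (m + 3),
        poch (1 / 2) r * poch (-(m : ℝ) - 2) r * 2 ^ r /
          (poch (-(4 * (m : ℝ)) - 4) r * (Nat.factorial r : ℝ))) -
      (∑ r ∈ Finset.range (m + 2),
        poch (1 / 2) r * poch (-(m : ℝ) - 1) r * 2 ^ r /
          (poch (-(4 * (m : ℝ))) r * (Nat.factorial r : ℝ)))) := by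
  rcases lt_or_ge m 6 with h6 | h6
  · interval_cases m
    all_goals norm_num [poch, Finset.sum_range_succ, Finset.prod_range_succ, Nat.factorial]
  · rw [gt_iff_lt, ← sub_pos]
    rw [convert m (by omega)]
    obtain ⟨k, rfl⟩ : ∃ k, m = k + 6 := ⟨m - 6, by omega⟩
    rw [show k + 6 + 3 = 8 + (k + 1) from by omega, Finset.sum_range_add]
    apply add_pos_of_pos_of_nonneg (head_pos k)
    apply Finset.sum_nonneg
    intro j hj
    have hj' : j < k + 1 := Finset.mem_range.mp hj
    unfold wfun
    apply mul_nonneg (bb_nonneg (by omega))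
    rw [sub_nonneg]
    exact Smono (x := ((k + 6 : ℕ) : ℝ)) (mm := k + 6) rfl (by omega) (by omega)
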